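/- arXiv:1909.08543 — 4 statements merged into one kernel-verified Lean document; each statement's English description precedes it below -/
import Mathlib

section
/- The language (aa+bb)*ab, i.e., the set of words of the form w·ab where w is a concatenation of blocks aa and bb, is densely ordered under the lexicographic order. -/
variable {A : Type*} [LinearOrder A]

/-- strict ordering: first difference, smaller letter -/
def ltS (u v : List A) : Prop :=
  ∃ (x y z : List A) (a b : A), a < b ∧ u = x ++ a :: y ∧ v = x ++ b :: z

/-- proper prefix ordering -/
def ltP (u v : List A) : Prop := ∃ w : List A, w ≠ [] ∧ v = u ++ w

/-- lexicographic ordering, union of ltP and ltS -/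
def ltLex (u v : List A) : Prop := ltP u v ∨ ltS u v

/-- repetition uⁿ -/
def rep (u : List A) (n : ℕ) : List A := (List.replicate n u).flatten

/-- a finite word is a prefix of an ω-word -/
def wPrefix (u : List A) (w : ℕ → A) : Prop :=
  ∀ i : Fin u.length, u.get i = w i

/-- finite word <_s ω-word -/
def ltSW (u : List A) (w : ℕ → A) : Prop :=
  ∃ i : Fin u.length, (∀ j (hj : j < i.1), u.get ⟨j, hj.trans i.2⟩ = w j) ∧ u.get i < w i

/-- ω-word <_s finite word -/
def ltWS (w : ℕ → A) (u : List A) : Prop :=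
  ∃ i : Fin u.length, (∀ j (hj : j < i.1), u.get ⟨j, hj.trans i.2⟩ = w j) ∧ w i < u.get i

/-- ω-word < ω-word -/
def ltWW (x w : ℕ → A) : Prop := ∃ i, (∀ j < i, x j = w j) ∧ x i < w i

/-- finite word <ℓ ω-word -/
def ltLexW (u : List A) (w : ℕ → A) : Prop := wPrefix u w ∨ ltSW u w

/-- `w` is the least upper bound of `S` in the lexicographic order on Σ* ∪ Σ^ω -/
def IsSupW (S : Set (List A)) (w : ℕ → A) : Prop :=
  (∀ u ∈ S, ltLexW u w) ∧
  (∀ x : ℕ → A, ltWW x w → ∃ u ∈ S, ¬ ltLexW u x) ∧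
  (∀ v : List A, ltLexW v w → ∃ u ∈ S, ¬ (ltLex u v ∨ u = v))

/-- the ω-word u v v v ⋯ -/
def uvomega [Inhabited A] (u v : List A) : ℕ → A := fun i =>
  if i < u.length then u.getD i default else v.getD ((i - u.length) % v.length) default

/-- concatenation of languages -/
def cat (K L : Set (List A)) : Set (List A) := {w | ∃ x ∈ K, ∃ y ∈ L, w = x ++ y}

/-- concatenation of a finite word and an ω-word -/
def catW (u : List A) (x : ℕ → A) : ℕ → A := fun i =>
  if h : i < u.length then u.get ⟨i, h⟩ else x (i - u.length)

/-- L has lexicographic order type ω -/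
def hasTypeOmega (L : Set (List A)) : Prop :=
  Nonempty ((fun u v : L => ltLex u.1 v.1) ≃r ((· < ·) : ℕ → ℕ → Prop))

/-- L has lexicographic order type -ω -/
def hasTypeOmegaRev (L : Set (List A)) : Prop :=
  Nonempty ((fun u v : L => ltLex u.1 v.1) ≃r (fun m n : ℕ => n < m))

def isPrefixChain (L : Set (List A)) : Prop :=
  ∀ u ∈ L, ∀ v ∈ L, u <+: v ∨ v <+: u

/-- doubling map: aux -/
abbrev DD (l : List Bool) : List Bool := l.flatMap fun c => [c, c]

lemma DD_cons (c : Bool) (l : List Bool) : DD (c :: l) = c :: c :: DD l := rfl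

lemma ltS_append_aux (w : List A) {u v : List A} (h : ltS u v) : ltS (w ++ u) (w ++ v) := by
  obtain ⟨x, y, z, a, b, hab, hu, hv⟩ := h
  exact ⟨w ++ x, y, z, a, b, hab, by simp [hu], by simp [hv]⟩

lemma L1_aux : ∀ r : List Bool,
    ltS (DD (List.replicate (r.length + 1) false) ++ [false, true]) (DD r ++ [false, true])
  | [] => ⟨[false], [false, true], [], false, true, by decide, rfl, rfl⟩
  | true :: r' =>
      ⟨[], false :: DD (List.replicate (r'.length + 1) false) ++ [false, true],
        true :: DD r' ++ [false, true], false, true, by decide, rfl, rfl⟩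
  | false :: r' => by
      have h := ltS_append_aux [false, false] (L1_aux r')
      simpa [List.replicate_succ, DD_cons] using h

lemma L2_aux : ∀ r : List Bool,
    ltS (DD r ++ [false, true]) (DD (List.replicate (r.length + 1) true) ++ [false, true])
  | [] => ⟨[], [true], true :: DD (List.replicate 0 true) ++ [false, true], false, true,
      by decide, rfl, by simp [List.replicate_succ, DD_cons]⟩
  | false :: r' =>
      ⟨[], false :: DD r' ++ [false, true],
        true :: DD (List.replicate (r'.length + 1) true) ++ [false, true], false, true,
        by decide, rfl, rfl⟩
  | true :: r' => by
      have h := ltS_append_aux [true, true] (L2_aux r')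
      simpa [List.replicate_succ, DD_cons] using h

lemma no_prefix_aux : ∀ l m w : List Bool,
    DD m ++ [false, true] = (DD l ++ [false, true]) ++ w → w = [] := by
  intro l
  induction l with
  | nil =>
      intro m w h
      cases m with
      | nil => simpa using h.symm
      | cons c m' =>
          exfalso
          simp [DD_cons] at h
          simp [h.1] at h
  | cons e l' ih =>
      intro m w h
      cases m with
      | nil =>
          exfalso
          have := congrArg List.length h
          simp [DD_cons] at this
      | cons d m' =>
          simp only [DD_cons, List.cons_append, List.nil_append, List.cons.injEq] at h
          exact ih m' w h.2.2

lemma step_a_aux (l m' s : List Bool)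
    (hx : DD l ++ [false, true] = false :: s) :
    ∃ n : List Bool, ltS (DD l ++ [false, true]) (DD n ++ [false, true]) ∧
      ltS (DD n ++ [false, true]) (DD (true :: m') ++ [false, true]) := by
  refine ⟨true :: List.replicate (m'.length + 1) false, ?_, ?_⟩
  · rw [hx]
    exact ⟨[], s, true :: DD (List.replicate (m'.length + 1) false) ++ [false, true],
      false, true, by decide, rfl, rfl⟩
  · have h := ltS_append_aux [true, true] (L1_aux m')
    simpa [DD_cons] using h

/-- main density lemma -/
lemma main_aux : ∀ l m p s t : List Bool,
    DD l ++ [false, true] = p ++ false :: s →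
    DD m ++ [false, true] = p ++ true :: t →
    ∃ n : List Bool, ltS (DD l ++ [false, true]) (DD n ++ [false, true]) ∧
      ltS (DD n ++ [false, true]) (DD m ++ [false, true]) := by
  intro l
  induction l with
  | nil =>
      intro m p s t hx hy
      rcases p with _ | ⟨c, _ | ⟨c', p₃⟩⟩
      · -- p = []
        simp only [List.nil_append] at hx hy
        cases m with
        | nil => simp at hy
        | cons d m' =>
            simp only [DD_cons, List.cons_append, List.nil_append, List.cons.injEq] at hy
            obtain ⟨hd, -⟩ := hy
            subst hd
            exact step_a_aux [] m' s hx
      · simp at hx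
      · simp at hx
  | cons e l' ih =>
      intro m p s t hx hy
      rcases p with _ | ⟨c, _ | ⟨c', p₃⟩⟩
      · -- p = []
        simp only [List.nil_append] at hx hy
        cases m with
        | nil => simp at hy
        | cons d m' =>
            simp only [DD_cons, List.cons_append, List.nil_append, List.cons.injEq] at hy
            obtain ⟨hd, -⟩ := hy
            subst hd
            exact step_a_aux (e :: l') m' s hx
      · -- p = [c] : forces e = c = false, m = []
        simp only [DD_cons, List.cons_append, List.nil_append, List.cons.injEq] at hx
        obtain ⟨hec, he, hs⟩ := hx
        subst hec; subst he
        cases m with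
        | cons d m' =>
            exfalso
            simp only [DD_cons, List.cons_append, List.nil_append, List.cons.injEq] at hy
            obtain ⟨h1, h2, -⟩ := hy
            simp [h1] at h2
        | nil =>
            refine ⟨false :: List.replicate (l'.length + 1) true, ?_, ?_⟩
            · have h := ltS_append_aux [false, false] (L2_aux l')
              simpa [DD_cons] using h
            · exact ⟨[false], DD (List.replicate (l'.length + 1) true) ++ [false, true],
                [], false, true, by decide, rfl, rfl⟩
      · -- p = c :: c' :: p₃ : peel a block and recurse
        simp only [DD_cons, List.cons_append, List.nil_append, List.cons.injEq] at hx hy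
        obtain ⟨hec, hec', hx'⟩ := hx
        cases m with
        | nil => exfalso; simp at hy
        | cons d m' =>
            simp only [DD_cons, List.cons_append, List.nil_append, List.cons.injEq] at hy
            obtain ⟨hdc, hdc', hy'⟩ := hy
            obtain ⟨n, h1, h2⟩ := ih m' p₃ s t hx' hy'
            refine ⟨e :: n, ?_, ?_⟩
            · simpa [DD_cons] using ltS_append_aux [e, e] h1
            · have hde : d = e := by rw [hdc, hec]
              subst hde
              simpa [DD_cons] using ltS_append_aux [d, d] h2

/-- the language (aa+bb)*ab is densely ordered by the lexicographic order. -/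
theorem stmt_4 :
    (∃ x ∈ {w : List Bool | ∃ l : List Bool, w = (l.flatMap fun c => [c, c]) ++ [false, true]},
      ∃ y ∈ {w : List Bool | ∃ l : List Bool, w = (l.flatMap fun c => [c, c]) ++ [false, true]},
        x ≠ y) ∧
    ∀ x ∈ {w : List Bool | ∃ l : List Bool, w = (l.flatMap fun c => [c, c]) ++ [false, true]},
      ∀ y ∈ {w : List Bool | ∃ l : List Bool, w = (l.flatMap fun c => [c, c]) ++ [false, true]},
        ltLex x y →
          ∃ z ∈ {w : List Bool | ∃ l : List Bool, w = (l.flatMap fun c => [c, c]) ++ [false, true]},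
            ltLex x z ∧ ltLex z y := by
  constructor
  · exact ⟨[false, true], ⟨[], rfl⟩, [true, true, false, true], ⟨[true], rfl⟩, by decide⟩
  · rintro x ⟨l, rfl⟩ y ⟨m, rfl⟩ hxy
    rcases hxy with ⟨w, hw, heq⟩ | ⟨p, s, t, a, b, hab, hu, hv⟩
    · exact absurd (no_prefix_aux l m w heq) hw
    · rw [Bool.lt_iff] at hab
      obtain ⟨rfl, rfl⟩ := hab
      obtain ⟨n, h1, h2⟩ := main_aux l m p s t hu hv
      exact ⟨DD n ++ [false, true], ⟨n, rfl⟩, Or.inr h1, Or.inr h2⟩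
end

section
/- If u₁u₂ⁿu₃u₄ⁿu₅ ∈ L for all n ≥ 0 and there exists n₀ with u₃u₄^{n₀} <_s u₂u₃u₄^{n₀}, then the sequence wₙ = u₁u₂^{n₀+n}u₃u₄^{n₀+n}u₅ is strictly increasing in <_s, and its supremum in the lexicographic order on finite and ω-words is u₁u₂^ω. -/
variable {A : Type*} [LinearOrder A]

section AuxLemmas
set_option linter.unusedSectionVars false

lemma myGetElem_idx_congr {B : Type*} {l : List B} {i j : ℕ} (h : i = j)
    (hi : i < l.length) : l[i]'hi = l[j]'(h ▸ hi) := by subst h; rfl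

lemma ltS_iff {u v : List A} :
    ltS u v ↔ ∃ i, ∃ (h1 : i < u.length) (h2 : i < v.length),
      (∀ j (hj : j < i), u[j]'(hj.trans h1) = v[j]'(hj.trans h2)) ∧ u[i] < v[i] := by
  constructor
  · rintro ⟨x, y, z, a, b, hab, rfl, rfl⟩
    refine ⟨x.length, by simp, by simp, ?_, ?_⟩
    · intro j hj
      rw [List.getElem_append_left hj, List.getElem_append_left hj]
    · rw [List.getElem_append_right le_rfl, List.getElem_append_right le_rfl]
      simpa using hab
  · rintro ⟨i, h1, h2, hagree, hlt⟩
    have htake : u.take i = v.take i := by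
      apply List.ext_getElem
      · rw [List.length_take, List.length_take]; omega
      · intro j hj1 hj2
        rw [List.getElem_take, List.getElem_take]
        exact hagree j (by simp at hj1; omega)
    refine ⟨u.take i, u.drop (i+1), v.drop (i+1), u[i], v[i], hlt, ?_, ?_⟩
    · conv_lhs => rw [← List.take_append_drop i u, List.drop_eq_getElem_cons h1]
    · conv_lhs => rw [← List.take_append_drop i v, List.drop_eq_getElem_cons h2]
      rw [htake]

lemma rep_zero (u : List A) : rep u 0 = [] := rfl

lemma rep_succ (u : List A) (n : ℕ) : rep u (n+1) = u ++ rep u n := rfl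

lemma rep_add (u : List A) (m n : ℕ) : rep u (m+n) = rep u m ++ rep u n := by
  induction m with
  | zero => simp [rep_zero]
  | succ k ih => rw [Nat.succ_add, rep_succ, rep_succ, ih, List.append_assoc]

lemma rep_one (u : List A) : rep u 1 = u := by simp [rep, List.replicate]

lemma rep_succ' (u : List A) (n : ℕ) : rep u (n+1) = rep u n ++ u := by
  rw [rep_add, rep_one]

lemma rep_length (u : List A) (n : ℕ) : (rep u n).length = n * u.length := by
  induction n with
  | zero => simp [rep_zero]
  | succ k ih => rw [rep_succ, List.length_append, ih]; ring

lemma ltS_irrefl (u : List A) : ¬ ltS u u := by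
  rw [ltS_iff]
  rintro ⟨i, h1, h2, -, hlt⟩
  exact absurd rfl hlt.ne

lemma ltS_trans {u v z : List A} (h1 : ltS u v) (h2 : ltS v z) : ltS u z := by
  rw [ltS_iff] at *
  obtain ⟨i, hi1, hi2, hia, hil⟩ := h1
  obtain ⟨j, hj1, hj2, hja, hjl⟩ := h2
  rcases lt_trichotomy i j with h | h | h
  · exact ⟨i, hi1, h.trans hj2, fun k hk => (hia k hk).trans (hja k (hk.trans h)),
      by rw [← hja i h]; exact hil⟩
  · subst h
    exact ⟨i, hi1, hj2, fun k hk => (hia k hk).trans (hja k hk), hil.trans hjl⟩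
  · exact ⟨j, h.trans hi1, hj2, fun k hk => (hia k (hk.trans h)).trans (hja k hk),
      by rw [hia j h]; exact hjl⟩

lemma ltS_prepend {u v : List A} (c : List A) (h : ltS u v) : ltS (c ++ u) (c ++ v) := by
  obtain ⟨x, y, z, a, b, hab, rfl, rfl⟩ := h
  exact ⟨c ++ x, y, z, a, b, hab, by simp, by simp⟩

lemma ltS_append {u v : List A} (s t : List A) (h : ltS u v) : ltS (u ++ s) (v ++ t) := by
  obtain ⟨x, y, z, a, b, hab, rfl, rfl⟩ := h
  exact ⟨x, y ++ s, z ++ t, a, b, hab, by simp, by simp⟩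

lemma ltS_rep_prepend {s u : List A} (h : ltS s (u ++ s)) :
    ∀ k, 1 ≤ k → ltS s (rep u k ++ s) := by
  intro k hk
  induction k with
  | zero => omega
  | succ m ih =>
    rcases Nat.eq_zero_or_pos m with rfl | hm
    · simpa [rep_succ, rep_zero] using h
    · have h2 : ltS (rep u m ++ s) (rep u (m+1) ++ s) := by
        rw [rep_succ', List.append_assoc]
        exact ltS_prepend _ h
      exact ltS_trans (ih hm) h2

end AuxLemmas

/-- if u₃u₄^{n₀} <_s u₂u₃u₄^{n₀}, the pumped sequence
wₙ = u₁u₂^{n₀+n}u₃u₄^{n₀+n}u₅ is a strictly <_s-increasing chain with supremum u₁u₂^ω. -/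
theorem stmt_6 (A : Type*) [LinearOrder A] (u1 u2 u3 u4 u5 : List A)
    (hlen : 1 ≤ (u2 ++ u4).length) (n0 : ℕ)
    (h0 : ltS (u3 ++ rep u4 n0) (u2 ++ u3 ++ rep u4 n0)) :
    (∀ n : ℕ,
      ltS (u1 ++ rep u2 (n0 + n) ++ u3 ++ rep u4 (n0 + n) ++ u5)
          (u1 ++ rep u2 (n0 + n + 1) ++ u3 ++ rep u4 (n0 + n + 1) ++ u5)) ∧
    ∃ w : ℕ → A, (∀ n : ℕ, wPrefix (u1 ++ rep u2 n) w) ∧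
      IsSupW
        (Set.range fun n : ℕ => u1 ++ rep u2 (n0 + n) ++ u3 ++ rep u4 (n0 + n) ++ u5)
        w := by
  -- normalize h0
  have h0' : ltS (u3 ++ rep u4 n0) (u2 ++ (u3 ++ rep u4 n0)) := by
    rwa [List.append_assoc] at h0
  -- u2 is nonempty
  have hu2 : u2 ≠ [] := by
    rintro rfl
    rw [List.nil_append] at h0'
    exact ltS_irrefl _ h0'
  have hu2len : 1 ≤ u2.length := List.length_pos_iff.mpr hu2
  -- a default letter
  obtain ⟨x0, y0, z0, a0, b0, hab0, -, -⟩ := id h0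
  set d : A := a0 with hd
  -- decomposition of the pumped words
  have H1 : ∀ n : ℕ, u1 ++ rep u2 (n0+n) ++ u3 ++ rep u4 (n0+n) ++ u5
      = (u1 ++ rep u2 (n0+n)) ++ ((u3 ++ rep u4 n0) ++ (rep u4 n ++ u5)) := by
    intro n
    simp only [rep_add, List.append_assoc]
  -- PART 1 : the chain is strictly increasing
  have part1 : ∀ n : ℕ,
      ltS (u1 ++ rep u2 (n0 + n) ++ u3 ++ rep u4 (n0 + n) ++ u5)
          (u1 ++ rep u2 (n0 + n + 1) ++ u3 ++ rep u4 (n0 + n + 1) ++ u5) := by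
    intro n
    have key := ltS_prepend (u1 ++ rep u2 (n0+n))
      (ltS_append (rep u4 n ++ u5) (rep u4 (n+1) ++ u5) h0')
    have e2 : u1 ++ rep u2 (n0+n+1) ++ u3 ++ rep u4 (n0+n+1) ++ u5
        = (u1 ++ rep u2 (n0+n)) ++ ((u2 ++ (u3 ++ rep u4 n0)) ++ (rep u4 (n+1) ++ u5)) := by
      have hidx : n0 + n + 1 = n0 + (n+1) := by omega
      have hu2c : rep u2 (n0+(n+1)) = rep u2 (n0+n) ++ u2 := by
        rw [show n0+(n+1) = (n0+n)+1 by omega, rep_succ']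
      have hu4c : rep u4 (n0+(n+1)) = rep u4 n0 ++ rep u4 (n+1) := rep_add u4 n0 (n+1)
      rw [hidx, hu2c, hu4c]
      simp only [List.append_assoc]
    rw [H1 n, e2]
    exact key
  -- lengths
  have lenm : ∀ m : ℕ, (u1 ++ rep u2 m).length = u1.length + m * u2.length := by
    intro m; simp [rep_length]
  have PF : ∀ {m n : ℕ}, m ≤ n → (u1 ++ rep u2 m) <+: (u1 ++ rep u2 n) := by
    intro m n h
    obtain ⟨k, rfl⟩ := Nat.exists_eq_add_of_le h
    exact ⟨rep u2 k, by rw [rep_add, List.append_assoc]⟩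
  -- the omega word
  set w : ℕ → A := fun i => (u1 ++ rep u2 (i+1)).getD i d with hw
  have hwlt : ∀ i : ℕ, i < (u1 ++ rep u2 (i+1)).length := by
    intro i
    have h1 : i + 1 ≤ (i+1) * u2.length := Nat.le_mul_of_pos_right _ (by omega)
    rw [lenm]; omega
  have P : ∀ m i (h : i < (u1 ++ rep u2 m).length), (u1 ++ rep u2 m)[i] = w i := by
    intro m i h
    have hwdef : w i = (u1 ++ rep u2 (i+1))[i]'(hwlt i) := List.getD_eq_getElem _ _ (hwlt i)
    rw [hwdef]
    rcases le_total m (i+1) with hc | hc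
    · exact (PF hc).getElem h
    · exact ((PF hc).getElem (hwlt i)).symm
  -- prefix property
  have hpref : ∀ n : ℕ, wPrefix (u1 ++ rep u2 n) w := by
    intro n i
    exact P n i.1 i.2
  -- the chain fact
  have hs0len : 1 ≤ (u3 ++ rep u4 n0).length := by
    obtain ⟨i0, h1, -, -, -⟩ := ltS_iff.mp h0'
    omega
  obtain ⟨ic, hicu, hicv, hagc, hltc⟩ :=
    ltS_iff.mp (ltS_rep_prepend h0' (u3 ++ rep u4 n0).length hs0len)
  have hick : ic < (rep u2 (u3 ++ rep u4 n0).length).length := by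
    rw [rep_length]
    have := Nat.le_mul_of_pos_right ((u3 ++ rep u4 n0).length) (show 0 < u2.length by omega)
    omega
  have hagc' : ∀ j (hj : j < ic),
      (u3 ++ rep u4 n0)[j]'(hj.trans hicu)
        = (rep u2 (u3 ++ rep u4 n0).length)[j]'(hj.trans hick) := by
    intro j hj
    exact (hagc j hj).trans (List.getElem_append_left (hj.trans hick))
  have hltc' : (u3 ++ rep u4 n0)[ic]'hicu
      < (rep u2 (u3 ++ rep u4 n0).length)[ic]'hick := by
    have he := List.getElem_append_left (bs := u3 ++ rep u4 n0) hick (h' := hicv)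
    rw [← he]
    exact hltc
  -- w above the base is the chain word
  have waux : ∀ m j (hj : j < (rep u2 (u3 ++ rep u4 n0).length).length),
      w (u1.length + m * u2.length + j) = (rep u2 (u3 ++ rep u4 n0).length)[j] := by
    intro m j hj
    have hlt2 : u1.length + m*u2.length + j
        < (u1 ++ rep u2 (m + (u3 ++ rep u4 n0).length)).length := by
      rw [lenm, Nat.add_mul]
      rw [rep_length] at hj
      omega
    rw [← P _ _ hlt2,
      List.getElem_of_eq (show u1 ++ rep u2 (m + (u3 ++ rep u4 n0).length)
        = (u1 ++ rep u2 m) ++ rep u2 (u3 ++ rep u4 n0).length by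
          rw [rep_add, List.append_assoc]),
      List.getElem_append_right (by rw [lenm]; omega)]
    exact (myGetElem_idx_congr (by rw [lenm]; omega) _).symm
  -- getElem of the pumped words below the base
  have H3 : ∀ n J (hJ : J < u1.length + (n0+n)*u2.length)
      (hJ2 : J < (u1 ++ rep u2 (n0+n) ++ u3 ++ rep u4 (n0+n) ++ u5).length),
      (u1 ++ rep u2 (n0+n) ++ u3 ++ rep u4 (n0+n) ++ u5)[J] = w J := by
    intro n J hJ hJ2
    rw [List.getElem_of_eq (H1 n), List.getElem_append_left (by rw [lenm]; exact hJ)]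
    exact P (n0+n) J (by rw [lenm]; exact hJ)
  -- getElem of the pumped words in the (u3 ++ rep u4 n0) block
  have H4 : ∀ n j (hj : j < (u3 ++ rep u4 n0).length)
      (hJ2 : u1.length + (n0+n)*u2.length + j
          < (u1 ++ rep u2 (n0+n) ++ u3 ++ rep u4 (n0+n) ++ u5).length),
      (u1 ++ rep u2 (n0+n) ++ u3 ++ rep u4 (n0+n) ++ u5)[u1.length + (n0+n)*u2.length + j]
        = (u3 ++ rep u4 n0)[j] := by
    intro n j hj hJ2
    rw [List.getElem_of_eq (H1 n), List.getElem_append_right (by rw [lenm]; omega),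
      myGetElem_idx_congr (show u1.length + (n0+n)*u2.length + j - (u1 ++ rep u2 (n0+n)).length
        = j by rw [lenm]; omega),
      List.getElem_append_left hj]
  -- length lower bound
  have H5 : ∀ n : ℕ, u1.length + (n0+n)*u2.length + (u3 ++ rep u4 n0).length
      ≤ (u1 ++ rep u2 (n0+n) ++ u3 ++ rep u4 (n0+n) ++ u5).length := by
    intro n
    rw [H1 n]
    simp only [List.length_append, rep_length]
    omega
  have hbase : ∀ t : ℕ, t < u1.length + (n0+(t+1))*u2.length := by
    intro t
    have := Nat.le_mul_of_pos_right (m := u2.length) (n0+(t+1)) (by omega)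
    omega
  refine ⟨part1, w, hpref, ?_, ?_, ?_⟩
  · -- upper bound
    rintro u ⟨n, rfl⟩
    right
    show ltSW (u1 ++ rep u2 (n0+n) ++ u3 ++ rep u4 (n0+n) ++ u5) w
    have hIlt : u1.length + (n0+n)*u2.length + ic
        < (u1 ++ rep u2 (n0+n) ++ u3 ++ rep u4 (n0+n) ++ u5).length :=
      lt_of_lt_of_le (by omega) (H5 n)
    refine ⟨⟨u1.length + (n0+n)*u2.length + ic, hIlt⟩, ?_, ?_⟩
    · intro j hj
      have hj' : j < u1.length + (n0+n)*u2.length + ic := hj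
      rcases lt_or_ge j (u1.length + (n0+n)*u2.length) with hc | hc
      · exact H3 n j hc (lt_of_lt_of_le (by omega) (H5 n))
      · obtain ⟨j', rfl⟩ : ∃ j', j = u1.length + (n0+n)*u2.length + j' :=
          ⟨j - (u1.length + (n0+n)*u2.length), by omega⟩
        have hj2 : j' < ic := by omega
        exact (H4 n j' (hj2.trans hicu) (lt_of_lt_of_le (by omega) (H5 n))).trans
          ((hagc' j' hj2).trans (waux (n0+n) j' (lt_of_lt_of_le (by omega)
            (le_of_lt hick))).symm)
    · exact lt_of_lt_of_le (lt_of_eq_of_lt (H4 n ic hicu hIlt) (lt_of_lt_of_eq hltc'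
        (waux (n0+n) ic hick).symm)) le_rfl
  · -- no omega word below works
    intro x hx
    obtain ⟨i', hagx, hltx⟩ := hx
    refine ⟨_, ⟨i'+1, rfl⟩, ?_⟩
    show ¬ ltLexW (u1 ++ rep u2 (n0+(i'+1)) ++ u3 ++ rep u4 (n0+(i'+1)) ++ u5) x
    have hib : i' < u1.length + (n0+(i'+1))*u2.length := hbase i'
    have hilen : i' < (u1 ++ rep u2 (n0+(i'+1)) ++ u3 ++ rep u4 (n0+(i'+1)) ++ u5).length :=
      lt_of_lt_of_le (by omega) (H5 (i'+1))
    have hWi : (u1 ++ rep u2 (n0+(i'+1)) ++ u3 ++ rep u4 (n0+(i'+1)) ++ u5)[i']'hilen = w i' :=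
      H3 (i'+1) i' hib hilen
    rintro (hpre2 | hsw)
    · have h2 : x i' = w i' := ((hpre2 ⟨i', hilen⟩).symm.trans hWi :)
      exact hltx.ne h2
    · obtain ⟨⟨j, hjlen⟩, hagj, hltj⟩ := hsw
      rcases lt_trichotomy j i' with hc | rfl | hc
      · have h1 : w j < x j := lt_of_eq_of_lt ((H3 (i'+1) j (by omega) hjlen).symm) hltj
        rw [← hagx j hc] at h1
        exact lt_irrefl _ (h1.trans h1)
      · have h1 : w j < x j := lt_of_eq_of_lt (hWi.symm) hltj
        exact lt_irrefl _ (hltx.trans h1)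
      · have h2 : x i' = w i' := ((hagj i' hc).symm.trans hWi :)
        exact hltx.ne h2
  · -- no finite word below works
    intro v hv
    rcases hv with hpre2 | hsw
    · refine ⟨_, ⟨v.length+1, rfl⟩, ?_⟩
      show ¬ (ltLex (u1 ++ rep u2 (n0+(v.length+1)) ++ u3 ++ rep u4 (n0+(v.length+1)) ++ u5) v
        ∨ u1 ++ rep u2 (n0+(v.length+1)) ++ u3 ++ rep u4 (n0+(v.length+1)) ++ u5 = v)
      have hvb : v.length < u1.length + (n0+(v.length+1))*u2.length := hbase v.length
      have hlenW : v.length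
          < (u1 ++ rep u2 (n0+(v.length+1)) ++ u3 ++ rep u4 (n0+(v.length+1)) ++ u5).length :=
        lt_of_lt_of_le (by omega) (H5 (v.length+1))
      rintro (hlex | heq)
      · rcases hlex with ⟨t, ht, hvt⟩ | hs
        · have h1 := congrArg List.length hvt
          rw [List.length_append] at h1
          have ht' : t.length ≠ 0 := fun h => ht (List.length_eq_zero_iff.mp h)
          omega
        · rw [ltS_iff] at hs
          obtain ⟨j, hj1, hj2, hagj, hltj⟩ := hs
          have h1 : w j < v[j]'hj2 := lt_of_eq_of_lt ((H3 (v.length+1) j (by omega) hj1).symm) hltj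
          have h2 : v[j]'hj2 = w j := hpre2 ⟨j, hj2⟩
          exact lt_irrefl _ (lt_of_lt_of_eq h1 h2)
      · have h1 := congrArg List.length heq
        omega
    · obtain ⟨⟨i', hi'v⟩, hagv, hltv⟩ := hsw
      refine ⟨_, ⟨i'+1, rfl⟩, ?_⟩
      show ¬ (ltLex (u1 ++ rep u2 (n0+(i'+1)) ++ u3 ++ rep u4 (n0+(i'+1)) ++ u5) v
        ∨ u1 ++ rep u2 (n0+(i'+1)) ++ u3 ++ rep u4 (n0+(i'+1)) ++ u5 = v)
      have hib : i' < u1.length + (n0+(i'+1))*u2.length := hbase i'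
      have hilen : i' < (u1 ++ rep u2 (n0+(i'+1)) ++ u3 ++ rep u4 (n0+(i'+1)) ++ u5).length :=
        lt_of_lt_of_le (by omega) (H5 (i'+1))
      have hWi : (u1 ++ rep u2 (n0+(i'+1)) ++ u3 ++ rep u4 (n0+(i'+1)) ++ u5)[i']'hilen = w i' :=
        H3 (i'+1) i' hib hilen
      rintro (hlex | heq)
      · rcases hlex with ⟨t, ht, hvt⟩ | hs
        · have hWv : (u1 ++ rep u2 (n0+(i'+1)) ++ u3 ++ rep u4 (n0+(i'+1)) ++ u5) <+: v :=
            ⟨t, hvt.symm⟩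
          have h3 : v[i']'hi'v = w i' := ((hWv.getElem hilen).symm.trans hWi :)
          exact hltv.ne h3
        · rw [ltS_iff] at hs
          obtain ⟨j, hj1, hj2, hagj, hltj⟩ := hs
          rcases lt_trichotomy j i' with hc | rfl | hc
          · have h1 : w j < v[j]'hj2 :=
              lt_of_eq_of_lt ((H3 (i'+1) j (by omega) hj1).symm) hltj
            have h2 : v[j]'hj2 = w j := hagv j hc
            exact lt_irrefl _ (lt_of_lt_of_eq h1 h2)
          · have h1 : w j < v[j]'hj2 := lt_of_eq_of_lt hWi.symm hltj
            exact lt_irrefl _ (hltv.trans h1)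
          · have h2 : v[i']'hi'v = w i' := ((hagj i' hc).symm.trans hWi :)
            exact hltv.ne h2
      · have h3 : v[i']'hi'v = w i' :=
          (((List.getElem_of_eq heq hilen).symm).trans hWi :)
        exact hltv.ne h3
end

section
/- If a language L₁ is not a prefix chain (so contains u <_s v) and L₂ is an infinite language, then the lexicographic order type of the concatenation L₁·L₂ is an infinite order type different from ω; concretely, some element of L₁·L₂ has infinitely many elements of L₁·L₂ strictly below it. -/
variable {A : Type*} [LinearOrder A]

/-- if L₁ contains u <_s v and L₂ is infinite, then L₁L₂ is infinite, not of
order type ω, and some element of L₁L₂ has infinitely many elements strictly below it. -/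
theorem stmt_11 (A : Type*) [LinearOrder A] (L1 L2 : Set (List A))
    (u v : List A) (hu : u ∈ L1) (hv : v ∈ L1) (huv : ltS u v) (h2 : L2.Infinite) :
    (cat L1 L2).Infinite ∧ ¬ hasTypeOmega (cat L1 L2) ∧
      ∃ z ∈ cat L1 L2, {z' ∈ cat L1 L2 | ltLex z' z}.Infinite := by
  obtain ⟨x, y, zz, a, b, hab, hu', hv'⟩ := huv
  obtain ⟨w0, hw0⟩ := h2.nonempty
  have key : ∀ w w' : List A, ltS (u ++ w) (v ++ w') := by
    intro w w'
    exact ⟨x, y ++ w, zz ++ w', a, b, hab, by simp [hu'], by simp [hv']⟩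
  set z := v ++ w0 with hz
  have hzmem : z ∈ cat L1 L2 := ⟨v, hv, w0, hw0, rfl⟩
  have hsub : (fun w => u ++ w) '' L2 ⊆ {z' ∈ cat L1 L2 | ltLex z' z} := by
    rintro _ ⟨w, hw, rfl⟩
    exact ⟨⟨u, hu, w, hw, rfl⟩, Or.inr (key w w0)⟩
  have himg : ((fun w => u ++ w) '' L2).Infinite :=
    h2.image (fun s _ t _ h => List.append_cancel_left h)
  have hSinf : {z' ∈ cat L1 L2 | ltLex z' z}.Infinite := himg.mono hsub
  have hcatinf : (cat L1 L2).Infinite := hSinf.mono (fun z' hz' => hz'.1)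
  refine ⟨hcatinf, ?_, z, hzmem, hSinf⟩
  rintro ⟨e⟩
  have hfin : {s : ↥(cat L1 L2) | ltLex s.1 z}.Finite := by
    have heq : {s : ↥(cat L1 L2) | ltLex s.1 z} = e ⁻¹' (Set.Iio (e ⟨z, hzmem⟩)) := by
      ext s
      simp only [Set.mem_setOf_eq, Set.mem_preimage, Set.mem_Iio]
      exact (e.map_rel_iff (a := s) (b := ⟨z, hzmem⟩)).symm
    rw [heq]
    exact (Set.finite_Iio _).preimage e.injective.injOn
  have hfin2 : {z' ∈ cat L1 L2 | ltLex z' z}.Finite := by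
    apply (hfin.image Subtype.val).subset
    rintro z' ⟨h1, h2'⟩
    exact ⟨⟨z', h1⟩, h2', rfl⟩
  exact hSinf hfin2
end

section
/- Let L₁ be a prefix chain of order type ω with supremum uv^ω, contained in Pref(uv^ω), and let c be a letter. If there exists a word x ∈ L₁ and a letter a < c such that x·a is a prefix of the supremum ⋁L₁ = uv^ω, then the order type of L₁·{c} is not ω (some element of L₁·{c} has infinitely many predecessors). Conversely, if no such x and a exist, then L₁·{c} has order type ω. -/
variable {A : Type*} [LinearOrder A]

lemma ltS_intro {u v : List A} (i : ℕ) (hu : i < u.length) (hv : i < v.length)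
    (hagree : ∀ j (hj : j < i), u[j]'(hj.trans hu) = v[j]'(hj.trans hv))
    (hlt : u[i] < v[i]) : ltS u v := by
  refine ⟨u.take i, u.drop (i+1), v.drop (i+1), u[i], v[i], hlt, ?_, ?_⟩
  · conv_lhs => rw [← List.take_append_drop i u, List.drop_eq_getElem_cons hu]
  · have htake : v.take i = u.take i := by
      apply List.ext_getElem
      · simp [Nat.le_of_lt hu, Nat.le_of_lt hv]
      · intro j h1 h2
        simp only [List.getElem_take]
        exact (hagree j (by simp at h2; exact h2.1)).symm
    conv_lhs => rw [← List.take_append_drop i v, List.drop_eq_getElem_cons hv, htake]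

lemma ltS_elim {u v : List A} (h : ltS u v) :
    ∃ i, ∃ (hu : i < u.length) (hv : i < v.length),
      (∀ j (hj : j < i), u[j]'(hj.trans hu) = v[j]'(hj.trans hv)) ∧ u[i] < v[i] := by
  obtain ⟨x, y, z, a, b, hab, rfl, rfl⟩ := h
  refine ⟨x.length, by simp, by simp, ?_, ?_⟩
  · intro j hj
    rw [List.getElem_append_left hj, List.getElem_append_left hj]
  · rw [List.getElem_append_right le_rfl, List.getElem_append_right le_rfl]
    simpa using hab

lemma ltLex_irrefl (u : List A) : ¬ ltLex u u := by
  rintro (⟨w, hw, hE⟩ | h)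
  · have := congrArg List.length hE
    simp at this
    exact hw this
  · obtain ⟨i, h1, h2, _, hlt⟩ := ltS_elim h
    exact lt_irrefl _ hlt

lemma ltLex_asymm {u v : List A} (h1 : ltLex u v) (h2 : ltLex v u) : False := by
  rcases h1 with ⟨w1, hw1, rfl⟩ | hS1
  · rcases h2 with ⟨w2, hw2, hE⟩ | hS2
    · rw [List.append_assoc] at hE
      have := congrArg List.length hE
      simp at this
      exact hw1 this.1
    · obtain ⟨i, hu, hv, _, hlt⟩ := ltS_elim hS2
      rw [List.getElem_append_left hv] at hlt
      exact lt_irrefl _ hlt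
  · rcases h2 with ⟨w2, hw2, rfl⟩ | hS2
    · obtain ⟨i, hu, hv, _, hlt⟩ := ltS_elim hS1
      rw [List.getElem_append_left hv] at hlt
      exact lt_irrefl _ hlt
    · obtain ⟨i, hui, hvi, hag1, hlt1⟩ := ltS_elim hS1
      obtain ⟨j, hvj, huj, hag2, hlt2⟩ := ltS_elim hS2
      rcases lt_trichotomy i j with hij | rfl | hij
      · have := hag2 i hij
        rw [this] at hlt1
        exact lt_irrefl _ hlt1
      · exact lt_irrefl _ (hlt1.trans hlt2)
      · have := hag1 j hij
        rw [this] at hlt2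
        exact lt_irrefl _ hlt2

lemma step_lemma (w : ℕ → A) (L1 : Set (List A)) (hchain : isPrefixChain L1)
    (hpref' : ∀ x ∈ L1, ∀ i (h : i < x.length), x[i] = w i) (c : A)
    (h2 : ∀ x ∈ L1, ∀ a : A, wPrefix (x ++ [a]) w → ¬ a < c)
    {x y : List A} (hx : x ∈ L1) (hy : y ∈ L1) (hxy : ltLex x y) :
    ltLex (x ++ [c]) (y ++ [c]) := by
  have hne : x ≠ y := by rintro rfl; exact ltLex_irrefl x hxy
  have hpxy : x <+: y := by
    rcases hchain x hx y hy with h | h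
    · exact h
    · obtain ⟨t, rfl⟩ := h
      have ht : t ≠ [] := by rintro rfl; simp at hne
      exact (ltLex_asymm hxy (Or.inl ⟨t, ht, rfl⟩)).elim
  have hlen : x.length < y.length :=
    lt_of_le_of_ne hpxy.length_le (fun h => hne (hpxy.eq_of_length h))
  have hwp : wPrefix (x ++ [y[x.length]]) w := by
    intro ⟨i, hi⟩
    simp only [List.get_eq_getElem]
    simp only [List.length_append, List.length_singleton] at hi
    rcases Nat.lt_or_ge i x.length with h | h
    · rw [List.getElem_append_left h]; exact hpref' x hx i h
    · have hieq : i = x.length := by omega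
      subst hieq
      rw [List.getElem_concat_length rfl]
      exact hpref' y hy x.length hlen
  have hac : ¬ y[x.length] < c := h2 x hx _ hwp
  rcases eq_or_lt_of_le (not_lt.mp hac) with hca | hca
  · refine Or.inl ⟨y.drop (x.length + 1) ++ [c], by simp, ?_⟩
    have hy' : y = x ++ y[x.length] :: y.drop (x.length + 1) := by
      conv_lhs => rw [← List.take_append_drop x.length y, List.drop_eq_getElem_cons hlen]
      congr 1
      exact (List.prefix_iff_eq_take.mp hpxy).symm
    rw [hy', ← hca]
    simp
  · refine Or.inr (ltS_intro x.length (by simp) (by simp; omega) ?_ ?_)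
    · intro j hj
      rw [List.getElem_append_left hj, List.getElem_append_left (hj.trans hlen)]
      exact hpxy.getElem hj
    · rw [List.getElem_concat_length rfl, List.getElem_append_left hlen]
      exact hca

/-- for an infinite prefix chain L₁ of type ω with supremum uv^ω and a letter c:
if some x ∈ L₁ and a < c give x·a a prefix of uv^ω, then L₁·{c} does not have order type ω
(some element has infinitely many predecessors); otherwise L₁·{c} has order type ω. -/
theorem stmt_14 (A : Type*) [LinearOrder A] [Inhabited A] (u v : List A) (hv : v ≠ [])
    (L1 : Set (List A)) (hinf : L1.Infinite) (hchain : isPrefixChain L1)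
    (homega : hasTypeOmega L1)
    (hpref : ∀ x ∈ L1, wPrefix x (uvomega u v))
    (hsup : IsSupW L1 (uvomega u v)) (c : A) :
    ((∃ x ∈ L1, ∃ a : A, a < c ∧ wPrefix (x ++ [a]) (uvomega u v)) →
      (¬ hasTypeOmega {w : List A | ∃ x ∈ L1, w = x ++ [c]} ∧
        ∃ z ∈ {w : List A | ∃ x ∈ L1, w = x ++ [c]},
          {z' ∈ {w : List A | ∃ x ∈ L1, w = x ++ [c]} | ltLex z' z}.Infinite)) ∧
    ((¬ ∃ x ∈ L1, ∃ a : A, a < c ∧ wPrefix (x ++ [a]) (uvomega u v)) →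
      hasTypeOmega {w : List A | ∃ x ∈ L1, w = x ++ [c]}) := by
  have hpref' : ∀ x ∈ L1, ∀ i (h : i < x.length), x[i] = uvomega u v i := by
    intro x hx i h
    have := hpref x hx ⟨i, h⟩
    simpa [List.get_eq_getElem] using this
  constructor
  · rintro ⟨x, hx, a, hac, hxa⟩
    have haw : a = uvomega u v x.length := by
      have h1 := hxa ⟨x.length, by simp⟩
      rw [List.get_eq_getElem, List.getElem_concat_length rfl] at h1
      exact h1
    have hkey : ∀ y ∈ L1, x.length < y.length → ltS (y ++ [c]) (x ++ [c]) := by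
      intro y hy hylen
      have hpxy : x <+: y := by
        rcases hchain x hx y hy with h | h
        · exact h
        · exact absurd h.length_le (by omega)
      refine ltS_intro x.length (by simp; omega) (by simp) ?_ ?_
      · intro j hj
        rw [List.getElem_append_left (hj.trans hylen), List.getElem_append_left hj]
        exact (hpxy.getElem hj).symm
      · rw [List.getElem_append_left hylen, List.getElem_concat_length rfl]
        rw [hpref' y hy x.length hylen, ← haw]
        exact hac
    have hfin : {y ∈ L1 | y.length ≤ x.length}.Finite := by
      rw [← Set.finite_coe_iff]
      have hinj : Function.Injective
          (fun y : {y ∈ L1 | y.length ≤ x.length} =>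
            (⟨y.1.length, Nat.lt_succ_of_le y.2.2⟩ : Fin (x.length + 1))) := by
        intro y1 y2 h
        simp only [Fin.mk.injEq] at h
        apply Subtype.ext
        rcases hchain y1.1 y1.2.1 y2.1 y2.2.1 with hp | hp
        · exact hp.eq_of_length h
        · exact (hp.eq_of_length h.symm).symm
      exact Finite.of_injective _ hinj
    have hbig : {y ∈ L1 | x.length < y.length}.Infinite := by
      apply (hinf.diff hfin).mono
      rintro y ⟨hy1, hy2⟩
      simp only [Set.mem_setOf_eq, not_and, not_le] at hy2
      exact ⟨hy1, hy2 hy1⟩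
    have hpreds : {z' ∈ {w : List A | ∃ x ∈ L1, w = x ++ [c]} | ltLex z' (x ++ [c])}.Infinite := by
      have hinj : Set.InjOn (fun y => y ++ [c]) {y ∈ L1 | x.length < y.length} := by
        intro y1 _ y2 _ h
        simpa using h
      refine (hbig.image hinj).mono ?_
      rintro _ ⟨y, ⟨hy1, hy2⟩, rfl⟩
      exact ⟨⟨y, hy1, rfl⟩, Or.inr (hkey y hy1 hy2)⟩
    have hnot : ¬ hasTypeOmega {w : List A | ∃ x ∈ L1, w = x ++ [c]} := by
      rintro ⟨e⟩
      have hz : (x ++ [c]) ∈ {w : List A | ∃ x ∈ L1, w = x ++ [c]} := ⟨x, hx, rfl⟩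
      haveI := Set.infinite_coe_iff.mpr hpreds
      have hfin2 : Finite ↥{z' ∈ {w : List A | ∃ x ∈ L1, w = x ++ [c]} | ltLex z' (x ++ [c])} := by
        refine Finite.of_injective
          (fun p => (⟨e ⟨p.1, p.2.1⟩, e.map_rel_iff.mpr p.2.2⟩ : Fin (e ⟨x ++ [c], hz⟩))) ?_
        intro p q h
        simp only [Fin.mk.injEq] at h
        have h3 := e.injective (by exact_mod_cast h)
        apply Subtype.ext
        injection h3
      exact not_finite ↥{z' ∈ {w : List A | ∃ x ∈ L1, w = x ++ [c]} | ltLex z' (x ++ [c])}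
    exact ⟨hnot, x ++ [c], ⟨x, hx, rfl⟩, hpreds⟩
  · intro hno
    have h2' : ∀ x ∈ L1, ∀ a : A, wPrefix (x ++ [a]) (uvomega u v) → ¬ a < c := by
      intro x hx a hw hac
      exact hno ⟨x, hx, a, hac, hw⟩
    obtain ⟨e⟩ := homega
    have key : ∀ (p q : L1), ltLex p.1 q.1 ↔ ltLex (p.1 ++ [c]) (q.1 ++ [c]) := by
      intro p q
      constructor
      · exact step_lemma _ L1 hchain hpref' c h2' p.2 q.2
      · intro h
        have hne : p.1 ≠ q.1 := by
          intro hE; rw [hE] at h; exact ltLex_irrefl _ h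
        rcases hchain p.1 p.2 q.1 q.2 with hp | hp
        · obtain ⟨t, ht⟩ := hp
          exact Or.inl ⟨t, fun h0 => hne (by rw [← ht, h0, List.append_nil]), ht.symm⟩
        · exfalso
          obtain ⟨t, ht⟩ := hp
          have hlt : ltLex q.1 p.1 :=
            Or.inl ⟨t, fun h0 => hne.symm (by rw [← ht, h0, List.append_nil]), ht.symm⟩
          exact ltLex_asymm h (step_lemma _ L1 hchain hpref' c h2' q.2 p.2 hlt)
    refine ⟨?_⟩
    let ψ : L1 → {w : List A | ∃ x ∈ L1, w = x ++ [c]} := fun p => ⟨p.1 ++ [c], p.1, p.2, rfl⟩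
    have hbij : Function.Bijective ψ := by
      constructor
      · intro p q h
        apply Subtype.ext
        have := congrArg Subtype.val h
        simpa [ψ] using this
      · rintro ⟨_, y, hy, rfl⟩
        exact ⟨⟨y, hy⟩, rfl⟩
    exact (RelIso.mk (Equiv.ofBijective ψ hbij) (fun {p q} => (key p q).symm)).symm.trans e
end
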